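/- Error-MDP duality (adversarial policy as error-seeking agent): Let (S,d) be a finite metric space, P and P̂ two transition kernels on the same finite MDP (reward r with 0 ≤ r ≤ R_max, discount γ ∈ (0,1), initial distribution ρ₀), and Π a nonempty set of stationary policies such that V_π^{P̂} is L_v-Lipschitz with respect to d for every π ∈ Π. Define the Error-MDP value V_π(M_err) = Σ_{(s,a)} d_π(s,a)·W₁(P(·|s,a), P̂(·|s,a)) (occupancy under the true kernel P) and V*(M_err) = sup_{π∈Π} V_π(M_err) (finite, since each W₁ is at most the diameter of (S,d) and each occupancy has total mass 1/(1−γ)). Then sup_{π∈Π} |V_π(P) − V_π(P̂)| ≤ γ·L_v·V*(M_err). -/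
import Mathlib


open Finset Real

/-- `p` is a probability mass function on a finite type. -/
def IsPMF {X : Type*} [Fintype X] (p : X → ℝ) : Prop :=
  (∀ x, 0 ≤ p x) ∧ ∑ x, p x = 1

/-- `P` is a transition kernel: each `P s a` is a pmf on states. -/
def IsKernel {S A : Type*} [Fintype S] [Fintype A] (P : S → A → S → ℝ) : Prop :=
  ∀ s a, IsPMF (P s a)

/-- `pol` is a stationary policy: each `pol s` is a pmf on actions. -/
def IsPolicy {S A : Type*} [Fintype S] [Fintype A] (pol : S → A → ℝ) : Prop :=
  ∀ s, IsPMF (pol s)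

/-- `V` satisfies the Bellman evaluation equation for policy `pol` under kernel `P`,
reward `r` and discount `γ`. -/
def IsValue {S A : Type*} [Fintype S] [Fintype A] (P : S → A → S → ℝ) (pol : S → A → ℝ)
    (r : S → A → ℝ) (γ : ℝ) (V : S → ℝ) : Prop :=
  ∀ s, V s = ∑ a, pol s a * (r s a + γ * ∑ s', P s a s' * V s')

/-- `d` is the (unnormalized) discounted state-action occupancy of `pol` under kernel `P`
with initial distribution `ρ₀` and discount `γ`. -/
def IsOcc {S A : Type*} [Fintype S] [Fintype A] (P : S → A → S → ℝ) (pol : S → A → ℝ)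
    (ρ₀ : S → ℝ) (γ : ℝ) (d : S → A → ℝ) : Prop :=
  ∀ s a, d s a = pol s a * (ρ₀ s + γ * ∑ x : S × A, d x.1 x.2 * P x.1 x.2 s)

/-- ℓ₁ distance between two pmfs on a finite type. -/
noncomputable def l1Dist {X : Type*} [Fintype X] (p q : X → ℝ) : ℝ :=
  ∑ x, |p x - q x|

/-- Total variation distance between two pmfs on a finite type. -/
noncomputable def tvDist {X : Type*} [Fintype X] (p q : X → ℝ) : ℝ :=
  (1 / 2) * ∑ x, |p x - q x|

/-- Kullback-Leibler divergence between two pmfs on a finite type (finite under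
absolute continuity). -/
noncomputable def klF {X : Type*} [Fintype X] (p q : X → ℝ) : ℝ :=
  ∑ x, p x * Real.log (p x / q x)

/-- `d_data` satisfies κ-coverage for the policy set `Pol` under kernel `P`:
every occupancy of a policy in `Pol` is dominated by `κ · d_data`. -/
def KappaCoverage {S A : Type*} [Fintype S] [Fintype A] (P : S → A → S → ℝ) (ρ₀ : S → ℝ)
    (γ : ℝ) (Pol : Set (S → A → ℝ)) (ddata : S → A → ℝ) (κ : ℝ) : Prop :=
  ∀ pol ∈ Pol, ∀ dpol : S → A → ℝ, IsOcc P pol ρ₀ γ dpol → ∀ s a, dpol s a ≤ κ * ddata s a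

/-- Critic discrepancy `Δ_{D,P̂}(s,a)`. -/
noncomputable def critDelta {S A : Type*} [Fintype S] (P Phat : S → A → S → ℝ)
    (D : S → A → S → ℝ) (s : S) (a : A) : ℝ :=
  (∑ s', P s a s' * D s a s') - ∑ s', Phat s a s' * D s a s'

/-- Supremum over the critic class of the critic discrepancy at `(s,a)`. -/
noncomputable def critSup {S A : Type*} [Fintype S] (𝒟 : Set (S → A → S → ℝ))
    (P Phat : S → A → S → ℝ) (s : S) (a : A) : ℝ :=
  sSup {y | ∃ D ∈ 𝒟, y = critDelta P Phat D s a}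

/-- 1-Wasserstein distance between two pmfs on a finite metric space
(Kantorovich–Rubinstein dual form). -/
noncomputable def w1 {X : Type*} [Fintype X] [MetricSpace X] (p q : X → ℝ) : ℝ :=
  sSup {y | ∃ f : X → ℝ, (∀ a b, |f a - f b| ≤ dist a b) ∧ y = ∑ x, (p x - q x) * f x}

section aux
variable {X : Type*} [Fintype X] [MetricSpace X]


lemma pmf_le_one {p : X → ℝ} (hp : IsPMF p) (x : X) : p x ≤ 1 := by
  rw [← hp.2]
  exact Finset.single_le_sum (fun i _ => hp.1 i) (Finset.mem_univ x)

lemma pmf_sub_sum {p q : X → ℝ} (hp : IsPMF p) (hq : IsPMF q) :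
    ∑ x, (p x - q x) = 0 := by
  rw [Finset.sum_sub_distrib, hp.2, hq.2, sub_self]

lemma w1_set_bdd [Nonempty X] {p q : X → ℝ} (hp : IsPMF p) (hq : IsPMF q) :
    ∀ y ∈ {y | ∃ f : X → ℝ, (∀ a b, |f a - f b| ≤ dist a b) ∧ y = ∑ x, (p x - q x) * f x},
      y ≤ ∑ x : X, 2 * dist x (Classical.arbitrary X) := by
  rintro y ⟨f, hf, rfl⟩
  set x₀ := Classical.arbitrary X with hx₀
  have h0 : ∑ x, (p x - q x) * f x = ∑ x, (p x - q x) * (f x - f x₀) := by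
    simp only [mul_sub, Finset.sum_sub_distrib, ← Finset.sum_mul, pmf_sub_sum hp hq,
      zero_mul, sub_zero]
  rw [h0]
  apply Finset.sum_le_sum
  intro x _
  calc (p x - q x) * (f x - f x₀) ≤ |(p x - q x) * (f x - f x₀)| := le_abs_self _
    _ = |p x - q x| * |f x - f x₀| := abs_mul _ _
    _ ≤ 2 * dist x x₀ := by
        apply mul_le_mul _ (hf x x₀) (abs_nonneg _) (by norm_num)
        have h1 := pmf_le_one hp x
        have h2 := pmf_le_one hq x
        have h3 := hp.1 x
        have h4 := hq.1 x
        rw [abs_le]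
        constructor <;> linarith

lemma w1_set_nonempty (p q : X → ℝ) :
    (0 : ℝ) ∈ {y | ∃ f : X → ℝ, (∀ a b, |f a - f b| ≤ dist a b) ∧ y = ∑ x, (p x - q x) * f x} :=
  ⟨fun _ => 0, fun a b => by simpa using dist_nonneg, by simp⟩

lemma w1_bddAbove [Nonempty X] {p q : X → ℝ} (hp : IsPMF p) (hq : IsPMF q) :
    BddAbove {y | ∃ f : X → ℝ, (∀ a b, |f a - f b| ≤ dist a b) ∧ y = ∑ x, (p x - q x) * f x} :=
  ⟨_, w1_set_bdd hp hq⟩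

lemma w1_le_bound [Nonempty X] {p q : X → ℝ} (hp : IsPMF p) (hq : IsPMF q) :
    w1 p q ≤ ∑ x : X, 2 * dist x (Classical.arbitrary X) :=
  csSup_le ⟨0, w1_set_nonempty p q⟩ (w1_set_bdd hp hq)

lemma w1_nonneg [Nonempty X] {p q : X → ℝ} (hp : IsPMF p) (hq : IsPMF q) :
    0 ≤ w1 p q :=
  le_csSup (w1_bddAbove hp hq) (w1_set_nonempty p q)

lemma abs_pairing_le [Nonempty X] {p q : X → ℝ} (hp : IsPMF p) (hq : IsPMF q)
    {L : ℝ} {f : X → ℝ} (hf : ∀ a b, |f a - f b| ≤ L * dist a b) :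
    |∑ x, (p x - q x) * f x| ≤ L * w1 p q := by
  by_cases hL : 0 < L
  · have key : ∀ g : X → ℝ, (∀ a b, |g a - g b| ≤ L * dist a b) →
        ∑ x, (p x - q x) * g x ≤ L * w1 p q := by
      intro g hg
      have hmem : ∑ x, (p x - q x) * (g x / L) ∈
          {y | ∃ f : X → ℝ, (∀ a b, |f a - f b| ≤ dist a b) ∧ y = ∑ x, (p x - q x) * f x} := by
        refine ⟨fun x => g x / L, fun a b => ?_, rfl⟩
        rw [div_sub_div_same, abs_div, abs_of_pos hL, div_le_iff₀ hL]
        calc |g a - g b| ≤ L * dist a b := hg a b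
          _ = dist a b * L := by ring
      have hw : ∑ x, (p x - q x) * (g x / L) ≤ w1 p q := le_csSup (w1_bddAbove hp hq) hmem
      calc ∑ x, (p x - q x) * g x = L * ∑ x, (p x - q x) * (g x / L) := by
            rw [Finset.mul_sum]
            exact Finset.sum_congr rfl fun x _ => by field_simp
        _ ≤ L * w1 p q := mul_le_mul_of_nonneg_left hw hL.le
    rw [abs_le]
    constructor
    · have := key (fun x => -f x) (fun a b => by rw [show -f a - -f b = -(f a - f b) by ring, abs_neg]; exact hf a b)
      simp only [mul_neg, Finset.sum_neg_distrib] at this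
      linarith
    · exact key f hf
  · push_neg at hL
    have hconst : ∀ a b : X, f a = f b := by
      intro a b
      have h := hf a b
      have : L * dist a b ≤ 0 := mul_nonpos_of_nonpos_of_nonneg hL dist_nonneg
      have := abs_nonneg (f a - f b)
      have : |f a - f b| = 0 := le_antisymm (by linarith [hf a b]) (abs_nonneg _)
      rw [abs_eq_zero, sub_eq_zero] at this
      exact this
    have hzero : ∑ x, (p x - q x) * f x = 0 := by
      have : ∀ x, f x = f (Classical.arbitrary X) := fun x => hconst x _
      calc ∑ x, (p x - q x) * f x = ∑ x, (p x - q x) * f (Classical.arbitrary X) := by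
            exact Finset.sum_congr rfl fun x _ => by rw [this x]
        _ = (∑ x, (p x - q x)) * f (Classical.arbitrary X) := by rw [Finset.sum_mul]
        _ = 0 := by rw [pmf_sub_sum hp hq, zero_mul]
    rw [hzero, abs_zero]
    rcases eq_or_lt_of_le hL with hL0 | hLneg
    · rw [hL0]; simp
    · -- L < 0 forces X subsingleton
      have hsub : ∀ a b : X, a = b := by
        intro a b
        by_contra hab
        have hd : 0 < dist a b := dist_pos.mpr hab
        have := hf a b
        nlinarith [abs_nonneg (f a - f b)]
      have hpq : ∀ x, p x = q x := by
        intro x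
        have hup : (Finset.univ : Finset X) = {x} := by
          apply Finset.eq_singleton_iff_unique_mem.mpr
          exact ⟨Finset.mem_univ x, fun y _ => hsub y x⟩
        have h1 : p x = 1 := by rw [← hp.2, hup, Finset.sum_singleton]
        have h2 : q x = 1 := by rw [← hq.2, hup, Finset.sum_singleton]
        rw [h1, h2]
      have hw : w1 p q = 0 := by
        have hset : {y | ∃ f : X → ℝ, (∀ a b, |f a - f b| ≤ dist a b) ∧
            y = ∑ x, (p x - q x) * f x} = {0} := by
          ext y
          simp only [Set.mem_setOf_eq, Set.mem_singleton_iff]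
          constructor
          · rintro ⟨g, _, rfl⟩
            exact Finset.sum_eq_zero fun x _ => by rw [hpq x, sub_self, zero_mul]
          · rintro rfl
            exact w1_set_nonempty p q
        rw [w1, hset, csSup_singleton]
      rw [hw, mul_zero]


lemma pmf_eq_of_all_eq {X : Type*} [Fintype X] {p q : X → ℝ} (hp : IsPMF p) (hq : IsPMF q)
    (h : ∀ a b : X, a = b) (x : X) : p x = q x := by
  have hup : (Finset.univ : Finset X) = {x} :=
    Finset.eq_singleton_iff_unique_mem.mpr ⟨Finset.mem_univ x, fun y _ => h y x⟩
  have h1 : p x = 1 := by rw [← hp.2, hup, Finset.sum_singleton]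
  have h2 : q x = 1 := by rw [← hq.2, hup, Finset.sum_singleton]
  rw [h1, h2]

lemma w1_eq_zero_of_eq {X : Type*} [Fintype X] [MetricSpace X] {p q : X → ℝ}
    (h : ∀ x, p x = q x) : w1 p q = 0 := by
  have hset : {y | ∃ f : X → ℝ, (∀ a b, |f a - f b| ≤ dist a b) ∧
      y = ∑ x, (p x - q x) * f x} = {0} := by
    ext y
    simp only [Set.mem_setOf_eq, Set.mem_singleton_iff]
    constructor
    · rintro ⟨g, _, rfl⟩
      exact Finset.sum_eq_zero fun x _ => by rw [h x, sub_self, zero_mul]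
    · rintro rfl
      exact w1_set_nonempty p q
  rw [w1, hset, csSup_singleton]

end aux

section mdp
variable {S A : Type*} [Fintype S] [Fintype A]

lemma occ_nonneg {P : S → A → S → ℝ} (hP : IsKernel P) {pol : S → A → ℝ}
    (hpol : IsPolicy pol) {ρ₀ : S → ℝ} (hρ : ∀ s, 0 ≤ ρ₀ s) {γ : ℝ}
    (hγ0 : 0 ≤ γ) (hγ1 : γ < 1) {d : S → A → ℝ} (hd : IsOcc P pol ρ₀ γ d) :
    ∀ s a, 0 ≤ d s a := by
  set neg : S × A → ℝ := fun x => max 0 (-(d x.1 x.2)) with hneg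
  have hnegnn : ∀ x, 0 ≤ neg x := fun x => le_max_left _ _
  have claim1 : ∀ s a, neg (s, a) ≤ γ * (pol s a * ∑ x, neg x * P x.1 x.2 s) := by
    intro s a
    have hrhs : 0 ≤ γ * (pol s a * ∑ x, neg x * P x.1 x.2 s) := by
      apply mul_nonneg hγ0
      apply mul_nonneg ((hpol s).1 a)
      exact Finset.sum_nonneg fun x _ => mul_nonneg (hnegnn x) ((hP x.1 x.2).1 s)
    apply max_le hrhs
    have hsum : ∑ x : S × A, (-(d x.1 x.2)) * P x.1 x.2 s ≤ ∑ x, neg x * P x.1 x.2 s :=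
      Finset.sum_le_sum fun x _ =>
        mul_le_mul_of_nonneg_right (le_max_right _ _) ((hP x.1 x.2).1 s)
    have hsum' : -∑ x : S × A, d x.1 x.2 * P x.1 x.2 s ≤ ∑ x, neg x * P x.1 x.2 s := by
      rw [← Finset.sum_neg_distrib]
      simpa [neg_mul] using hsum
    have hexp : -(d s a) = pol s a * (-(ρ₀ s) - γ * ∑ x : S × A, d x.1 x.2 * P x.1 x.2 s) := by
      rw [hd s a]; ring
    rw [hexp]
    calc pol s a * (-(ρ₀ s) - γ * ∑ x : S × A, d x.1 x.2 * P x.1 x.2 s)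
        ≤ pol s a * (γ * ∑ x, neg x * P x.1 x.2 s) := by
          apply mul_le_mul_of_nonneg_left _ ((hpol s).1 a)
          have := mul_le_mul_of_nonneg_left hsum' hγ0
          have hr := hρ s
          nlinarith
      _ = γ * (pol s a * ∑ x, neg x * P x.1 x.2 s) := by ring
  have claim2 : ∑ x : S × A, neg x ≤ γ * ∑ x : S × A, neg x := by
    calc ∑ x : S × A, neg x ≤ ∑ x : S × A, γ * (pol x.1 x.2 * ∑ y, neg y * P y.1 y.2 x.1) :=
          Finset.sum_le_sum fun x _ => claim1 x.1 x.2
      _ = γ * ∑ s, (∑ a, pol s a) * ∑ y, neg y * P y.1 y.2 s := by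
          rw [Fintype.sum_prod_type, Finset.mul_sum]
          exact Finset.sum_congr rfl fun s _ => by rw [Finset.sum_mul, Finset.mul_sum]
      _ = γ * ∑ s, ∑ y : S × A, neg y * P y.1 y.2 s := by
          congr 1
          exact Finset.sum_congr rfl fun s _ => by rw [(hpol s).2, one_mul]
      _ = γ * ∑ y : S × A, neg y * ∑ s, P y.1 y.2 s := by
          rw [Finset.sum_comm]
          congr 1
          exact Finset.sum_congr rfl fun y _ => by rw [Finset.mul_sum]
      _ = γ * ∑ y : S × A, neg y := by
          congr 1
          exact Finset.sum_congr rfl fun y _ => by rw [(hP y.1 y.2).2, mul_one]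
  have hN : ∑ x : S × A, neg x = 0 := by
    have hNnn : 0 ≤ ∑ x : S × A, neg x := Finset.sum_nonneg fun x _ => hnegnn x
    nlinarith
  intro s a
  have : neg (s, a) = 0 := by
    have := (Finset.sum_eq_zero_iff_of_nonneg fun x _ => hnegnn x).mp hN (s, a) (Finset.mem_univ _)
    exact this
  have : -(d s a) ≤ 0 := by
    have h := le_max_right 0 (-(d s a))
    rw [show max 0 (-(d s a)) = neg (s, a) from rfl, this] at h
    exact h
  linarith

lemma occ_mass {P : S → A → S → ℝ} (hP : IsKernel P) {pol : S → A → ℝ}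
    (hpol : IsPolicy pol) {ρ₀ : S → ℝ} (hρ : IsPMF ρ₀) {γ : ℝ}
    (hγ1 : γ < 1) {d : S → A → ℝ} (hd : IsOcc P pol ρ₀ γ d) :
    ∑ x : S × A, d x.1 x.2 = 1 / (1 - γ) := by
  have key : ∑ x : S × A, d x.1 x.2 = 1 + γ * ∑ x : S × A, d x.1 x.2 := by
    calc ∑ x : S × A, d x.1 x.2
        = ∑ s, ∑ a, pol s a * (ρ₀ s + γ * ∑ x : S × A, d x.1 x.2 * P x.1 x.2 s) := by
          rw [Fintype.sum_prod_type]
          exact Finset.sum_congr rfl fun s _ =>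
            Finset.sum_congr rfl fun a _ => hd s a
      _ = ∑ s, (ρ₀ s + γ * ∑ x : S × A, d x.1 x.2 * P x.1 x.2 s) := by
          refine Finset.sum_congr rfl fun s _ => ?_
          rw [← Finset.sum_mul, (hpol s).2, one_mul]
      _ = 1 + γ * ∑ s, ∑ x : S × A, d x.1 x.2 * P x.1 x.2 s := by
          rw [Finset.sum_add_distrib, hρ.2, ← Finset.mul_sum]
      _ = 1 + γ * ∑ x : S × A, d x.1 x.2 := by
          rw [Finset.sum_comm]
          congr 2
          refine Finset.sum_congr rfl fun x _ => ?_
          rw [← Finset.mul_sum, (hP x.1 x.2).2, mul_one]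
  have h1γ : 1 - γ ≠ 0 := by linarith
  field_simp
  linarith

lemma sim_identity {P Phat : S → A → S → ℝ} {pol : S → A → ℝ} {r : S → A → ℝ} {γ : ℝ}
    {ρ₀ V Vh : S → ℝ} {d : S → A → ℝ}
    (hV : IsValue P pol r γ V) (hVh : IsValue Phat pol r γ Vh)
    (hd : IsOcc P pol ρ₀ γ d) :
    (∑ s, ρ₀ s * V s) - ∑ s, ρ₀ s * Vh s =
      γ * ∑ x : S × A, d x.1 x.2 * ∑ s', (P x.1 x.2 s' - Phat x.1 x.2 s') * Vh s' := by
  set Δ : S → ℝ := fun s => V s - Vh s with hΔdef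
  set g : S → A → ℝ := fun s a => ∑ s', (P s a s' - Phat s a s') * Vh s' with hgdef
  set μ : S → ℝ := fun s => ρ₀ s + γ * ∑ x : S × A, d x.1 x.2 * P x.1 x.2 s with hμdef
  have hΔ : ∀ s, Δ s = γ * ∑ a, pol s a * ((∑ s', P s a s' * Δ s') + g s a) := by
    intro s
    have : Δ s = ∑ a, (pol s a * (r s a + γ * ∑ s', P s a s' * V s')
        - pol s a * (r s a + γ * ∑ s', Phat s a s' * Vh s')) := by
      rw [hΔdef]
      simp only
      rw [hV s, hVh s, Finset.sum_sub_distrib]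
    rw [this, Finset.mul_sum]
    refine Finset.sum_congr rfl fun a _ => ?_
    simp only [hgdef, hΔdef, mul_sub, sub_mul, Finset.sum_sub_distrib]
    ring
  have hdμ : ∀ s a, d s a = pol s a * μ s := fun s a => hd s a
  have LHS1 : ∑ s, μ s * Δ s =
      (∑ s, ρ₀ s * Δ s) + γ * ∑ x : S × A, d x.1 x.2 * ∑ s', P x.1 x.2 s' * Δ s' := by
    calc ∑ s, μ s * Δ s
        = ∑ s, (ρ₀ s * Δ s + γ * ∑ x : S × A, d x.1 x.2 * P x.1 x.2 s * Δ s) := by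
          refine Finset.sum_congr rfl fun s _ => ?_
          show (ρ₀ s + γ * ∑ x : S × A, d x.1 x.2 * P x.1 x.2 s) * Δ s = _
          rw [add_mul, mul_assoc, Finset.sum_mul]
      _ = (∑ s, ρ₀ s * Δ s) + γ * ∑ s, ∑ x : S × A, d x.1 x.2 * P x.1 x.2 s * Δ s := by
          rw [Finset.sum_add_distrib, ← Finset.mul_sum]
      _ = (∑ s, ρ₀ s * Δ s) + γ * ∑ x : S × A, d x.1 x.2 * ∑ s', P x.1 x.2 s' * Δ s' := by
          rw [Finset.sum_comm]
          congr 2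
          refine Finset.sum_congr rfl fun x _ => ?_
          rw [Finset.mul_sum]
          exact Finset.sum_congr rfl fun s _ => by ring
  have LHS2 : ∑ s, μ s * Δ s =
      γ * (∑ x : S × A, d x.1 x.2 * ∑ s', P x.1 x.2 s' * Δ s')
      + γ * ∑ x : S × A, d x.1 x.2 * g x.1 x.2 := by
    calc ∑ s, μ s * Δ s
        = ∑ s, ∑ a, γ * (d s a * ((∑ s', P s a s' * Δ s') + g s a)) := by
          refine Finset.sum_congr rfl fun s _ => ?_
          rw [hΔ s, Finset.mul_sum, Finset.mul_sum]
          refine Finset.sum_congr rfl fun a _ => ?_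
          rw [hdμ s a]
          ring
      _ = γ * ∑ x : S × A, d x.1 x.2 * ((∑ s', P x.1 x.2 s' * Δ s') + g x.1 x.2) := by
          rw [Finset.mul_sum, Fintype.sum_prod_type]
      _ = γ * (∑ x : S × A, d x.1 x.2 * ∑ s', P x.1 x.2 s' * Δ s')
          + γ * ∑ x : S × A, d x.1 x.2 * g x.1 x.2 := by
          simp only [mul_add]
          rw [Finset.sum_add_distrib, mul_add]
  have hfin : ∑ s, ρ₀ s * Δ s = γ * ∑ x : S × A, d x.1 x.2 * g x.1 x.2 := by linarith
  calc (∑ s, ρ₀ s * V s) - ∑ s, ρ₀ s * Vh s = ∑ s, ρ₀ s * Δ s := by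
        rw [hΔdef, ← Finset.sum_sub_distrib]
        exact Finset.sum_congr rfl fun s _ => by simp only; ring
    _ = γ * ∑ x : S × A, d x.1 x.2 * g x.1 x.2 := hfin

end mdp

/-- **Error-MDP duality.** The worst-case policy value gap over `Pol` is bounded by
`γ · Lv` times the optimal value of the Error-MDP whose reward is the one-step `W₁`
model error. -/
theorem error_mdp_duality
    {S A : Type*} [Fintype S] [Fintype A] [Nonempty S] [Nonempty A] [MetricSpace S]
    (P Phat : S → A → S → ℝ) (hP : IsKernel P) (hPhat : IsKernel Phat)
    (r : S → A → ℝ) (Rmax : ℝ) (hr : ∀ s a, 0 ≤ r s a ∧ r s a ≤ Rmax)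
    (γ : ℝ) (hγ0 : 0 < γ) (hγ1 : γ < 1)
    (ρ₀ : S → ℝ) (hρ : IsPMF ρ₀)
    (Pol : Set (S → A → ℝ)) (hPolNe : Pol.Nonempty) (hPol : ∀ p ∈ Pol, IsPolicy p)
    (Vof Vhatof : (S → A → ℝ) → S → ℝ)
    (hVof : ∀ p ∈ Pol, IsValue P p r γ (Vof p))
    (hVhatof : ∀ p ∈ Pol, IsValue Phat p r γ (Vhatof p))
    (docc : (S → A → ℝ) → S → A → ℝ)
    (hdocc : ∀ p ∈ Pol, IsOcc P p ρ₀ γ (docc p))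
    (Lv : ℝ)
    (hLip : ∀ p ∈ Pol, ∀ x y, |Vhatof p x - Vhatof p y| ≤ Lv * dist x y) :
    sSup {y | ∃ p ∈ Pol, y = |(∑ s, ρ₀ s * Vof p s) - ∑ s, ρ₀ s * Vhatof p s|} ≤
      γ * Lv *
        sSup {y | ∃ p ∈ Pol,
          y = ∑ x : S × A, docc p x.1 x.2 * w1 (P x.1 x.2) (Phat x.1 x.2)} := by
  obtain ⟨p₀, hp₀⟩ := hPolNe
  have hdnn : ∀ p ∈ Pol, ∀ s a, 0 ≤ docc p s a := fun p hp =>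
    occ_nonneg hP (hPol p hp) hρ.1 hγ0.le hγ1 (hdocc p hp)
  have main : ∀ p ∈ Pol, |(∑ s, ρ₀ s * Vof p s) - ∑ s, ρ₀ s * Vhatof p s|
      ≤ γ * (Lv * ∑ x : S × A, docc p x.1 x.2 * w1 (P x.1 x.2) (Phat x.1 x.2)) := by
    intro p hp
    rw [sim_identity (hVof p hp) (hVhatof p hp) (hdocc p hp), abs_mul, abs_of_pos hγ0]
    apply mul_le_mul_of_nonneg_left _ hγ0.le
    calc |∑ x : S × A, docc p x.1 x.2 * ∑ s', (P x.1 x.2 s' - Phat x.1 x.2 s') * Vhatof p s'|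
        ≤ ∑ x : S × A,
            |docc p x.1 x.2 * ∑ s', (P x.1 x.2 s' - Phat x.1 x.2 s') * Vhatof p s'| :=
          Finset.abs_sum_le_sum_abs _ _
      _ ≤ ∑ x : S × A, docc p x.1 x.2 * (Lv * w1 (P x.1 x.2) (Phat x.1 x.2)) := by
          refine Finset.sum_le_sum fun x _ => ?_
          rw [abs_mul, abs_of_nonneg (hdnn p hp x.1 x.2)]
          exact mul_le_mul_of_nonneg_left
            (abs_pairing_le (hP x.1 x.2) (hPhat x.1 x.2) (fun a b => hLip p hp a b))
            (hdnn p hp x.1 x.2)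
      _ = Lv * ∑ x : S × A, docc p x.1 x.2 * w1 (P x.1 x.2) (Phat x.1 x.2) := by
          rw [Finset.mul_sum]
          exact Finset.sum_congr rfl fun x _ => by ring
  refine csSup_le ⟨_, ⟨p₀, hp₀, rfl⟩⟩ ?_
  rintro y ⟨p, hp, rfl⟩
  by_cases hLv : 0 ≤ Lv
  · have hbdd : BddAbove {y | ∃ p ∈ Pol,
        y = ∑ x : S × A, docc p x.1 x.2 * w1 (P x.1 x.2) (Phat x.1 x.2)} := by
      refine ⟨(∑ x : S, 2 * dist x (Classical.arbitrary S)) * (1 / (1 - γ)), ?_⟩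
      rintro z ⟨p', hp', rfl⟩
      calc ∑ x : S × A, docc p' x.1 x.2 * w1 (P x.1 x.2) (Phat x.1 x.2)
          ≤ ∑ x : S × A, docc p' x.1 x.2 * ∑ s : S, 2 * dist s (Classical.arbitrary S) :=
            Finset.sum_le_sum fun x _ => mul_le_mul_of_nonneg_left
              (w1_le_bound (hP x.1 x.2) (hPhat x.1 x.2)) (hdnn p' hp' x.1 x.2)
        _ = (∑ x : S, 2 * dist x (Classical.arbitrary S)) * (1 / (1 - γ)) := by
            rw [← Finset.sum_mul, occ_mass hP (hPol p' hp') hρ hγ1 (hdocc p' hp')]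
            ring
    have hle : ∑ x : S × A, docc p x.1 x.2 * w1 (P x.1 x.2) (Phat x.1 x.2) ≤
        sSup {y | ∃ p ∈ Pol,
          y = ∑ x : S × A, docc p x.1 x.2 * w1 (P x.1 x.2) (Phat x.1 x.2)} :=
      le_csSup hbdd ⟨p, hp, rfl⟩
    calc |(∑ s, ρ₀ s * Vof p s) - ∑ s, ρ₀ s * Vhatof p s|
        ≤ γ * (Lv * ∑ x : S × A, docc p x.1 x.2 * w1 (P x.1 x.2) (Phat x.1 x.2)) := main p hp
      _ = γ * Lv * ∑ x : S × A, docc p x.1 x.2 * w1 (P x.1 x.2) (Phat x.1 x.2) := by ring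
      _ ≤ γ * Lv * sSup {y | ∃ p ∈ Pol,
            y = ∑ x : S × A, docc p x.1 x.2 * w1 (P x.1 x.2) (Phat x.1 x.2)} :=
          mul_le_mul_of_nonneg_left hle (mul_nonneg hγ0.le hLv)
  · push_neg at hLv
    have hsub : ∀ a b : S, a = b := by
      intro a b
      by_contra hab
      have h1 := hLip p₀ hp₀ a b
      have h2 := dist_pos.mpr hab
      nlinarith [abs_nonneg (Vhatof p₀ a - Vhatof p₀ b)]
    have hw : ∀ (s : S) (a : A), w1 (P s a) (Phat s a) = 0 := fun s a =>
      w1_eq_zero_of_eq (pmf_eq_of_all_eq (hP s a) (hPhat s a) hsub)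
    have hsupz : sSup {y | ∃ p ∈ Pol,
        y = ∑ x : S × A, docc p x.1 x.2 * w1 (P x.1 x.2) (Phat x.1 x.2)} = 0 := by
      have hall : ∀ z ∈ {y | ∃ p ∈ Pol,
          y = ∑ x : S × A, docc p x.1 x.2 * w1 (P x.1 x.2) (Phat x.1 x.2)}, z = 0 := by
        rintro z ⟨p', _, rfl⟩
        exact Finset.sum_eq_zero fun x _ => by rw [hw x.1 x.2, mul_zero]
      have hmem : (0 : ℝ) ∈ {y | ∃ p ∈ Pol,
          y = ∑ x : S × A, docc p x.1 x.2 * w1 (P x.1 x.2) (Phat x.1 x.2)} :=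
        ⟨p₀, hp₀, (Finset.sum_eq_zero fun x _ => by rw [hw x.1 x.2, mul_zero]).symm⟩
      exact le_antisymm (csSup_le ⟨0, hmem⟩ fun z hz => le_of_eq (hall z hz))
        (le_csSup ⟨0, fun z hz => le_of_eq (hall z hz)⟩ hmem)
    rw [hsupz, mul_zero]
    have hm := main p hp
    have : ∑ x : S × A, docc p x.1 x.2 * w1 (P x.1 x.2) (Phat x.1 x.2) = 0 :=
      Finset.sum_eq_zero fun x _ => by rw [hw x.1 x.2, mul_zero]
    rw [this, mul_zero, mul_zero] at hm
    exact hm
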